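/- Multiplicativity of the generic Euler number under products: let (a_μ) and (b_ν) be the Betti numbers of compact manifolds M and N, and suppose χ_0(M) = ⋯ = χ_{r−1}(M) = 0 and χ_0(N) = ⋯ = χ_{s−1}(N) = 0. Then χ_{r+s}(M × N) = χ_r(M)·χ_s(N), where the Betti numbers of M × N are given by the Künneth formula c_j = ∑_{μ+ν=j} a_μ b_ν. -/

import Mathlib

/-!
With `P_u = ∑ⱼ uⱼ Xʲ` the Poincaré polynomial of a sequence, expanding `(X - 1)ʲ` shows that
`χ_k(u)` is the `k`-th coefficient of `P_u(X - 1)`, i.e. the `k`-th Taylor coefficient of `P_u`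
at `-1`. The Künneth sequence has Poincaré polynomial `P_a * P_b`, and Taylor expansion is
multiplicative, so the claim is that the coefficient of `X^(r+s)` in a product of two polynomials
whose coefficients vanish below `r` and below `s` is the product of the coefficients at `r` and `s`.
-/

open Polynomial Finset

namespace Polynomial

theorem coeff_mul_add_of_coeff_lt_eq_zero {R : Type*} [Semiring R] {p q : R[X]} {r s : ℕ}
    (hp : ∀ k < r, p.coeff k = 0) (hq : ∀ k < s, q.coeff k = 0) :
    (p * q).coeff (r + s) = p.coeff r * q.coeff s := by
  rw [coeff_mul, sum_eq_single (r, s)]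
  · rintro ⟨i, j⟩ hij hne
    rw [HasAntidiagonal.mem_antidiagonal] at hij
    rcases lt_or_ge i r with hi | hi
    · rw [hp i hi, zero_mul]
    · have hj : j < s := by
        by_contra! hj
        exact hne (Prod.ext (by dsimp only; omega) (by dsimp only; omega))
      rw [hq j hj, mul_zero]
  · simp

theorem coeff_taylor_sum_C_mul_X_pow {R : Type*} [CommSemiring R] (x : R) (N k : ℕ)
    (u : ℕ → R) :
    (taylor x (∑ j ∈ range N, C (u j) * X ^ j)).coeff k
      = ∑ j ∈ range N, x ^ (j - k) * j.choose k * u j := by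
  simp only [map_sum, finsetSum_coeff, ← smul_eq_C_mul, LinearMap.map_smul_of_tower,
    taylor_X_pow, coeff_smul, coeff_X_add_C_pow, smul_eq_mul]
  exact sum_congr rfl fun j _ => mul_comm _ _

end Polynomial

theorem neg_one_pow_sub_mul_choose {R : Type*} [CommRing R] (j k : ℕ) :
    (-1 : R) ^ (j - k) * j.choose k = (-1) ^ k * ((j.choose k : R) * (-1) ^ j) := by
  rcases le_or_gt k j with h | h
  · obtain ⟨i, rfl⟩ := Nat.exists_eq_add_of_le h
    have hk : (-1 : R) ^ k * (-1) ^ k = 1 := by rw [← mul_pow]; norm_num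
    rw [Nat.add_sub_cancel_left]
    linear_combination (-((k + i).choose k : R) * (-1) ^ i) * hk
  · simp [Nat.choose_eq_zero_of_lt h]

section PoincarePoly

variable {R : Type*}

noncomputable def poincarePoly [Semiring R] (N : ℕ) (u : ℕ → R) : R[X] :=
  ∑ j ∈ range N, C (u j) * X ^ j

theorem coeff_poincarePoly [Semiring R] (N : ℕ) (u : ℕ → R) (j : ℕ) :
    (poincarePoly N u).coeff j = if j < N then u j else 0 := by
  simp [poincarePoly]

theorem coeff_poincarePoly_of_eq_zero [Semiring R] {N : ℕ} {u : ℕ → R}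
    (hu : ∀ j, N ≤ j → u j = 0) (j : ℕ) : (poincarePoly N u).coeff j = u j := by
  rw [coeff_poincarePoly]
  split_ifs with h
  · rfl
  · exact (hu j (not_lt.1 h)).symm

theorem poincarePoly_mul [Semiring R] {M N : ℕ} {u v : ℕ → R} (hu : ∀ j, M ≤ j → u j = 0)
    (hv : ∀ j, N ≤ j → v j = 0) :
    poincarePoly M u * poincarePoly N v
      = poincarePoly (M + N) fun j => ∑ p ∈ antidiagonal j, u p.1 * v p.2 := by
  ext j
  simp only [coeff_mul, coeff_poincarePoly_of_eq_zero hu, coeff_poincarePoly_of_eq_zero hv,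
    coeff_poincarePoly]
  split_ifs with hj
  · rfl
  · refine sum_eq_zero fun p hp => ?_
    rw [HasAntidiagonal.mem_antidiagonal] at hp
    rcases le_or_gt M p.1 with h | h
    · rw [hu _ h, zero_mul]
    · rw [hv _ (by omega), mul_zero]

theorem coeff_taylor_neg_one_poincarePoly [CommRing R] (N k : ℕ) (u : ℕ → R) :
    (taylor (-1) (poincarePoly N u)).coeff k
      = (-1) ^ k * ∑ j ∈ range N, (j.choose k : R) * (-1) ^ j * u j := by
  rw [poincarePoly, coeff_taylor_sum_C_mul_X_pow, mul_sum]
  exact sum_congr rfl fun j _ => by rw [neg_one_pow_sub_mul_choose, mul_assoc]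

end PoincarePoly

/-- Multiplicativity of the generic Euler number under products (combinatorial form):
given finitely supported sequences of Betti numbers `(a_μ)`, `(b_ν)` with
`χ_k(a) = 0` for `k < r` and `χ_k(b) = 0` for `k < s`, the Künneth sequence
`c_j = ∑_{μ+ν=j} a_μ b_ν` satisfies `χ_{r+s}(c) = χ_r(a)·χ_s(b)`,
where `χ_k(b) = (−1)^k ∑_j C(j,k)(−1)^j b_j`. -/
theorem stmt_6 (M r s : ℕ) (a b : ℕ → ℕ)
    (ha : ∀ j, M ≤ j → a j = 0) (hb : ∀ j, M ≤ j → b j = 0)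
    (hva : ∀ k < r,
      (-1 : ℤ) ^ k * ∑ j ∈ Finset.range M, (j.choose k : ℤ) * (-1) ^ j * (a j : ℤ) = 0)
    (hvb : ∀ k < s,
      (-1 : ℤ) ^ k * ∑ j ∈ Finset.range M, (j.choose k : ℤ) * (-1) ^ j * (b j : ℤ) = 0) :
    (-1 : ℤ) ^ (r + s) * (∑ j ∈ Finset.range (2 * M),
        (j.choose (r + s) : ℤ) * (-1) ^ j *
          (∑ p ∈ Finset.HasAntidiagonal.antidiagonal j, (a p.1 : ℤ) * (b p.2 : ℤ))) =
      ((-1 : ℤ) ^ r * ∑ j ∈ Finset.range M, (j.choose r : ℤ) * (-1) ^ j * (a j : ℤ)) *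
      ((-1 : ℤ) ^ s * ∑ j ∈ Finset.range M, (j.choose s : ℤ) * (-1) ^ j * (b j : ℤ)) := by
  set A := poincarePoly M fun j => (a j : ℤ)
  set B := poincarePoly M fun j => (b j : ℤ)
  have hA : ∀ k < r, (taylor (-1) A).coeff k = 0 := fun k hk => by
    rw [coeff_taylor_neg_one_poincarePoly]; exact hva k hk
  have hB : ∀ k < s, (taylor (-1) B).coeff k = 0 := fun k hk => by
    rw [coeff_taylor_neg_one_poincarePoly]; exact hvb k hk
  have key := coeff_mul_add_of_coeff_lt_eq_zero hA hB
  rwa [← taylor_mul, poincarePoly_mul (by exact_mod_cast ha) (by exact_mod_cast hb), ← two_mul,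
    coeff_taylor_neg_one_poincarePoly, coeff_taylor_neg_one_poincarePoly,
    coeff_taylor_neg_one_poincarePoly] at key
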